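/- In a finite directed acyclic graph with unique sink d, if every non-sink node has scale θ_i = θ and α_{ji} = 1, the expected minimum cost satisfies exp(-θ μ_i) = Σ_{r ∈ R_{id}} exp(-θ c_r), where R_{id} is the (finite) set of directed paths from i to d and c_r = Σ_{ij∈r} c_{ij} is the path cost; consequently the path choice probability Π_{ij∈r} p_{ij|i} equals the multinomial logit probability exp(-θ c_r)/Σ_{r'∈R_{id}} exp(-θ c_{r'}). -/
import Mathlib


open Real Finset

variable {N : Type*}

/-- Total cost of a path given as a list of nodes. -/
def pathCost (c : N → N → ℝ) : List N → ℝ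
  | i :: j :: rest => c i j + pathCost c (j :: rest)
  | _ => 0

/-- Probability of a path as the product of successive link choice probabilities. -/
def pathProb (p : N → N → ℝ) : List N → ℝ
  | i :: j :: rest => p i j * pathProb p (j :: rest)
  | _ => 1

/-- On a finite DAG with unique sink `d`, constant scale `θ` and unit allocation
parameters, the recursive logit expected minimum cost satisfies
`exp(-θ μ_i) = Σ_{r ∈ R_{id}} exp(-θ c_r)`, and the recursive path choice probability
coincides with the path-based multinomial logit probability. -/
theorem recursive_logit_eq_path_logit [Fintype N] [DecidableEq N]
    (F : N → Finset N) (d : N)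
    (hFd : F d = ∅) (hFne : ∀ i : N, i ≠ d → (F i).Nonempty)
    (ord : N → ℕ) (hord : ∀ i : N, ∀ j ∈ F i, ord j < ord i)
    (θ : ℝ) (hθ : 0 < θ) (c : N → N → ℝ) (μ : N → ℝ)
    (hμd : μ d = 0)
    (hμ : ∀ i : N, i ≠ d →
      μ i = -(1 / θ) * Real.log (∑ j ∈ F i, Real.exp (-θ * (c i j + μ j))))
    (p : N → N → ℝ)
    (hp : ∀ i : N, ∀ j ∈ F i,
      p i j = Real.exp (-θ * (c i j + μ j)) /
        (∑ j' ∈ F i, Real.exp (-θ * (c i j' + μ j'))))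
    (R : N → Finset (List N))
    (hRd : R d = {[d]})
    (hR : ∀ i : N, i ≠ d → ∀ r : List N,
      r ∈ R i ↔ ∃ j ∈ F i, ∃ q ∈ R j, r = i :: q) :
    (∀ i : N, Real.exp (-θ * μ i) = ∑ r ∈ R i, Real.exp (-θ * pathCost c r)) ∧
    (∀ i : N, ∀ r ∈ R i,
      pathProb p r =
        Real.exp (-θ * pathCost c r) / ∑ r' ∈ R i, Real.exp (-θ * pathCost c r')) := by
  have hhead : ∀ j : N, ∀ r ∈ R j, ∃ t, r = j :: t := by
    intro j r hr
    by_cases hj : j = d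
    · subst hj
      rw [hRd, Finset.mem_singleton] at hr
      exact ⟨[], hr⟩
    · obtain ⟨k, hk, q, hq, rfl⟩ := (hR j hj r).1 hr
      exact ⟨q, rfl⟩
  have hS : ∀ i : N, i ≠ d →
      Real.exp (-θ * μ i) = ∑ j ∈ F i, Real.exp (-θ * (c i j + μ j)) := by
    intro i hi
    have hpos : 0 < ∑ j ∈ F i, Real.exp (-θ * (c i j + μ j)) :=
      Finset.sum_pos (fun j _ => Real.exp_pos _) (hFne i hi)
    rw [hμ i hi, show -θ * (-(1 / θ) *
        Real.log (∑ j ∈ F i, Real.exp (-θ * (c i j + μ j)))) =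
        Real.log (∑ j ∈ F i, Real.exp (-θ * (c i j + μ j))) by
      field_simp]
    exact Real.exp_log hpos
  have hsum : ∀ i : N, i ≠ d → ∀ f : List N → ℝ,
      ∑ r ∈ R i, f r = ∑ j ∈ F i, ∑ q ∈ R j, f (i :: q) := by
    intro i hi f
    have hRi : R i = (F i).biUnion (fun j => (R j).image (fun q => i :: q)) := by
      ext r
      simp only [Finset.mem_biUnion, Finset.mem_image, hR i hi]
      constructor
      · rintro ⟨j, hj, q, hq, rfl⟩; exact ⟨j, hj, q, hq, rfl⟩
      · rintro ⟨j, hj, q, hq, rfl⟩; exact ⟨j, hj, q, hq, rfl⟩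
    rw [hRi, Finset.sum_biUnion]
    · refine Finset.sum_congr rfl fun j hj => ?_
      refine Finset.sum_image fun a _ b _ h => ?_
      simpa using h
    · intro j hj j' hj' hjj'
      simp only [Finset.disjoint_left, Finset.mem_image]
      rintro r ⟨q, hq, rfl⟩ ⟨q', hq', he⟩
      obtain ⟨t, rfl⟩ := hhead j q hq
      obtain ⟨t', rfl⟩ := hhead j' q' hq'
      apply hjj'
      have : j' :: t' = j :: t := by simpa using he
      simp_all
  have key : ∀ n : ℕ, ∀ i : N, ord i < n →
      Real.exp (-θ * μ i) = ∑ r ∈ R i, Real.exp (-θ * pathCost c r) := by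
    intro n
    induction n with
    | zero => exact fun i h => absurd h (Nat.not_lt_zero _)
    | succ n IH =>
      intro i hi
      by_cases hid : i = d
      · subst hid
        rw [hRd]
        simp [pathCost, hμd]
      · rw [hS i hid, hsum i hid]
        refine Finset.sum_congr rfl fun j hj => ?_
        have hjn : ord j < n := lt_of_lt_of_le (hord i j hj) (Nat.lt_succ_iff.mp hi)
        rw [show -θ * (c i j + μ j) = -θ * c i j + -θ * μ j by ring, Real.exp_add,
          IH j hjn, Finset.mul_sum]
        refine Finset.sum_congr rfl fun q hq => ?_
        obtain ⟨t, rfl⟩ := hhead j q hq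
        rw [← Real.exp_add]
        congr 1
        show -θ * c i j + -θ * pathCost c (j :: t) = -θ * (c i j + pathCost c (j :: t))
        ring
  have A : ∀ i : N, Real.exp (-θ * μ i) = ∑ r ∈ R i, Real.exp (-θ * pathCost c r) :=
    fun i => key (ord i + 1) i (Nat.lt_succ_self _)
  refine ⟨A, ?_⟩
  have keyB : ∀ n : ℕ, ∀ i : N, ord i < n → ∀ r ∈ R i,
      pathProb p r =
        Real.exp (-θ * pathCost c r) / ∑ r' ∈ R i, Real.exp (-θ * pathCost c r') := by
    intro n
    induction n with
    | zero => exact fun i h => absurd h (Nat.not_lt_zero _)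
    | succ n IH =>
      intro i hi r hr
      by_cases hid : i = d
      · subst hid
        rw [hRd, Finset.mem_singleton] at hr
        subst hr
        rw [hRd]
        simp [pathProb, pathCost]
      · obtain ⟨j, hj, q, hq, rfl⟩ := (hR i hid _).1 hr
        obtain ⟨t, rfl⟩ := hhead j q hq
        have hjn : ord j < n := lt_of_lt_of_le (hord i j hj) (Nat.lt_succ_iff.mp hi)
        have hq' := IH j hjn (j :: t) hq
        show p i j * pathProb p (j :: t) = _
        rw [hq', hp i j hj, ← A i, ← A j, ← hS i hid,
          show pathCost c (i :: j :: t) = c i j + pathCost c (j :: t) from rfl,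
          div_mul_div_comm,
          div_eq_div_iff (by positivity) (by positivity)]
        simp only [← Real.exp_add]
        exact congrArg Real.exp (by ring)
  exact fun i => keyB (ord i + 1) i (Nat.lt_succ_self _)
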